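/- Let 1 < β ≤ 2 and 1 < γ ≤ 2, let M₁, M₂ ≥ 2 be integers, let K₁, K₂ > 0, h₁, h₂ > 0, σ ∈ (0,1], and let c > 0 (in the paper, c = ĉ_0^{(n)} > 0). If real numbers w_{ij} (0 ≤ i ≤ M₁, 0 ≤ j ≤ M₂) vanish whenever i ∈ {0, M₁} or j ∈ {0, M₂}, and satisfy c·w_{ij} = −K₁ σ h₁^{−β} Σ_{k=i−M₁}^{i} g_k^{(β)} w_{i−k,j} − K₂ σ h₂^{−γ} Σ_{k=j−M₂}^{j} g_k^{(γ)} w_{i,j−k} for all 1 ≤ i ≤ M₁−1 and 1 ≤ j ≤ M₂−1, then w_{ij} = 0 for all i, j. Consequently, at each time level the two-dimensional implicit difference scheme has a unique solution. -/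

import Mathlib

open scoped Kronecker

/-- The fractional centred difference coefficients
`g_k^{(β)} = (−1)^k Γ(β+1) / (Γ(β/2 − k + 1) Γ(β/2 + k + 1))`. -/
noncomputable def g (β : ℝ) (k : ℤ) : ℝ :=
  (-1 : ℝ) ^ k * Real.Gamma (β + 1) /
    (Real.Gamma (β / 2 - k + 1) * Real.Gamma (β / 2 + k + 1))

/-- The `(M−1)×(M−1)` Toeplitz matrix with entries `g_{i−j}`. -/
noncomputable def Gmat (β : ℝ) (M : ℕ) : Matrix (Fin (M - 1)) (Fin (M - 1)) ℝ :=
  Matrix.of fun i j => g β ((i : ℤ) - (j : ℤ))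

/-- The two-dimensional coefficient matrix
`Mⁿ = c I + σ K₁ h₁^{−β} (I ⊗ G_β) + σ K₂ h₂^{−γ} (G_γ ⊗ I)`. -/
noncomputable def Mmat (β γ : ℝ) (M₁ M₂ : ℕ) (K₁ K₂ h₁ h₂ σ c : ℝ) :
    Matrix (Fin (M₂ - 1) × Fin (M₁ - 1)) (Fin (M₂ - 1) × Fin (M₁ - 1)) ℝ :=
  c • (1 : Matrix (Fin (M₂ - 1) × Fin (M₁ - 1)) (Fin (M₂ - 1) × Fin (M₁ - 1)) ℝ) +
    (σ * K₁ * h₁ ^ (-β)) • ((1 : Matrix (Fin (M₂ - 1)) (Fin (M₂ - 1)) ℝ) ⊗ₖ Gmat β M₁) +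
    (σ * K₂ * h₂ ^ (-γ)) • (Gmat γ M₂ ⊗ₖ (1 : Matrix (Fin (M₁ - 1)) (Fin (M₁ - 1)) ℝ))


noncomputable def t (β : ℝ) (k : ℤ) : ℝ :=
  (-1 : ℝ) ^ k * Real.Gamma β /
    (Real.Gamma (β / 2 + k) * Real.Gamma (β / 2 - k + 1))

lemma neg_one_zpow_sq (k : ℤ) : ((-1:ℝ)^k) * ((-1:ℝ)^k) = 1 := by
  rw [← zpow_add₀ (by norm_num : (-1:ℝ) ≠ 0)]
  have : k + k = 2 * k := by ring
  rw [this, zpow_mul]; norm_num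

lemma neg_one_zpow_neg (k : ℤ) : ((-1:ℝ)^(-k)) = (-1:ℝ)^k := by
  rw [zpow_neg]
  exact inv_eq_of_mul_eq_one_right (neg_one_zpow_sq k)

lemma neg_one_zpow_natCast (n : ℕ) : ((-1:ℝ)^((n:ℤ))) = (-1:ℝ)^n := zpow_natCast _ _

lemma gamma_nonint_ne_zero {β : ℝ} (hβ1 : 1 < β) (hβ2 : β < 2) (z : ℤ) :
    Real.Gamma (β/2 + z) ≠ 0 := by
  apply Real.Gamma_ne_zero
  intro m hm
  have h1 : ((-(m:ℤ) - z : ℤ) : ℝ) = β / 2 := by push_cast; linarith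
  have h2 : (1:ℝ)/2 < ((-(m:ℤ) - z : ℤ) : ℝ) := by rw [h1]; linarith
  have h3 : ((-(m:ℤ) - z : ℤ) : ℝ) < 1 := by rw [h1]; linarith
  have h4 : (0:ℤ) < -(m:ℤ) - z := by
    have : (0:ℝ) < ((-(m:ℤ) - z : ℤ) : ℝ) := lt_trans (by norm_num) h2
    exact_mod_cast this
  have h5 : (-(m:ℤ) - z : ℤ) < 1 := by exact_mod_cast h3
  omega
lemma gamma_sign (n : ℕ) : ∀ x : ℝ, -(n:ℝ) < x → x < -(n:ℝ) + 1 →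
    0 < (-1:ℝ)^n * Real.Gamma x := by
  induction n with
  | zero =>
    intro x h1 h2
    simpa using Real.Gamma_pos_of_pos (by simpa using h1)
  | succ n ih =>
    intro x h1 h2
    have hx0 : x < 0 := by push_cast at h2; linarith [Nat.cast_nonneg (α := ℝ) n]
    have key : Real.Gamma (x + 1) = x * Real.Gamma x := Real.Gamma_add_one (ne_of_lt hx0)
    have ih' := ih (x+1) (by push_cast at h1 ⊢; linarith) (by push_cast at h2 ⊢; linarith)
    rw [key] at ih'
    have hps : (-1:ℝ)^(n+1) = -(-1:ℝ)^n := by ring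
    rw [hps]
    by_contra hcon
    push_neg at hcon
    have h1' : 0 ≤ (-1:ℝ)^n * Real.Gamma x := by linarith
    nlinarith

lemma gamma_div_sign (n : ℕ) (x : ℝ) (h1 : -(n:ℝ) < x) (h2 : x < -(n:ℝ) + 1) :
    0 < (-1:ℝ)^n / Real.Gamma x := by
  have h := gamma_sign n x h1 h2
  have hne : Real.Gamma x ≠ 0 := by
    intro h0; rw [h0, mul_zero] at h; exact lt_irrefl _ h
  have : (-1:ℝ)^n / Real.Gamma x = ((-1:ℝ)^n * Real.Gamma x) / (Real.Gamma x)^2 := by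
    field_simp
  rw [this]
  positivity

lemma g_zero_pos {β : ℝ} (hβ1 : 1 < β) : 0 < g β 0 := by
  unfold g
  norm_num
  apply div_pos (Real.Gamma_pos_of_pos (by linarith))
  have := Real.Gamma_pos_of_pos (show 0 < β/2 + 1 by linarith)
  positivity

lemma g_symm (β : ℝ) (k : ℤ) : g β (-k) = g β k := by
  unfold g
  rw [neg_one_zpow_neg]
  push_cast
  rw [show β / 2 - -(k:ℝ) + 1 = β / 2 + k + 1 by ring, show β / 2 + -(k:ℝ) + 1 = β / 2 - k + 1 by ring,
    mul_comm (Real.Gamma (β / 2 + k + 1))]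

lemma g_nonpos_lt2 {β : ℝ} (hβ1 : 1 < β) (hβ2 : β < 2) {k : ℤ} (hk : 1 ≤ k) : g β k ≤ 0 := by
  set n : ℕ := (k-1).toNat with hn
  have hnk : (n:ℤ) = k - 1 := Int.toNat_of_nonneg (by omega)
  have hx1 : -(n:ℝ) < β/2 - k + 1 := by
    have : ((n:ℤ):ℝ) = (k:ℝ) - 1 := by exact_mod_cast hnk
    push_cast at this ⊢; linarith
  have hx2 : β/2 - k + 1 < -(n:ℝ) + 1 := by
    have : ((n:ℤ):ℝ) = (k:ℝ) - 1 := by exact_mod_cast hnk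
    push_cast at this ⊢; linarith
  have hdiv := gamma_div_sign n _ hx1 hx2
  have hΓx : Real.Gamma (β/2 - k + 1) ≠ 0 := by
    intro h0; rw [h0, div_zero] at hdiv; exact lt_irrefl _ hdiv
  have hΓY : 0 < Real.Gamma (β/2 + k + 1) := by
    apply Real.Gamma_pos_of_pos
    have : (1:ℝ) ≤ (k:ℝ) := by exact_mod_cast hk
    linarith
  have hpow : ((-1:ℝ)^k) = -(-1:ℝ)^n := by
    have : k = (n:ℤ) + 1 := by omega
    rw [this, zpow_add_one₀ (by norm_num : (-1:ℝ) ≠ 0), neg_one_zpow_natCast]; ring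
  have heq : g β k = -(((-1:ℝ)^n / Real.Gamma (β/2 - k + 1)) *
      (Real.Gamma (β + 1) / Real.Gamma (β/2 + k + 1))) := by
    unfold g
    rw [hpow]
    field_simp
  rw [heq]
  exact neg_nonpos_of_nonneg (mul_nonneg hdiv.le
    (div_nonneg (Real.Gamma_nonneg_of_nonneg (by linarith)) hΓY.le))

lemma t_nonneg_lt2 {β : ℝ} (hβ1 : 1 < β) (hβ2 : β < 2) {m : ℤ} (hm : m ≤ 0) : 0 ≤ t β m := by
  set p : ℕ := (-m).toNat with hp
  have hpm : (p:ℤ) = -m := Int.toNat_of_nonneg (by omega)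
  have hpr : ((p:ℝ)) = -(m:ℝ) := by exact_mod_cast hpm
  rcases eq_or_lt_of_le hm with h0 | hlt
  · subst h0
    unfold t
    norm_num
    have h1 := Real.Gamma_pos_of_pos (show 0 < β/2 by linarith)
    have h2 := Real.Gamma_pos_of_pos (show 0 < β/2 + 1 by linarith)
    positivity
  · -- m ≤ -1, p ≥ 1
    have hx1 : -(p:ℝ) < β/2 + m := by push_cast [hpr]; linarith
    have hx2 : β/2 + m < -(p:ℝ) + 1 := by push_cast [hpr]; linarith
    have hdiv := gamma_div_sign p _ hx1 hx2
    have hΓY : 0 < Real.Gamma (β/2 - m + 1) := by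
      apply Real.Gamma_pos_of_pos
      have : (m:ℝ) ≤ 0 := by exact_mod_cast hm
      linarith
    have hpow : ((-1:ℝ)^m) = (-1:ℝ)^p := by
      rw [← neg_one_zpow_natCast, hpm, neg_one_zpow_neg]
    have heq : t β m = ((-1:ℝ)^p / Real.Gamma (β/2 + m)) *
        (Real.Gamma β / Real.Gamma (β/2 - m + 1)) := by
      unfold t
      rw [hpow]
      field_simp
    rw [heq]
    exact mul_nonneg hdiv.le (div_nonneg (Real.Gamma_nonneg_of_nonneg (by linarith)) hΓY.le)

lemma t_nonpos_lt2 {β : ℝ} (hβ1 : 1 < β) (hβ2 : β < 2) {k : ℤ} (hk : 1 ≤ k) : t β k ≤ 0 := by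
  set n : ℕ := (k-1).toNat with hn
  have hnk : (n:ℤ) = k - 1 := Int.toNat_of_nonneg (by omega)
  have hnr : ((n:ℝ)) = (k:ℝ) - 1 := by exact_mod_cast hnk
  have hx1 : -(n:ℝ) < β/2 - k + 1 := by rw [hnr]; linarith
  have hx2 : β/2 - k + 1 < -(n:ℝ) + 1 := by rw [hnr]; linarith
  have hdiv := gamma_div_sign n _ hx1 hx2
  have hΓY : 0 < Real.Gamma (β/2 + k) := by
    apply Real.Gamma_pos_of_pos
    have : (1:ℝ) ≤ (k:ℝ) := by exact_mod_cast hk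
    linarith
  have hpow : ((-1:ℝ)^k) = -(-1:ℝ)^n := by
    have : k = (n:ℤ) + 1 := by omega
    rw [this, zpow_add_one₀ (by norm_num : (-1:ℝ) ≠ 0), neg_one_zpow_natCast]; ring
  have heq : t β k = -(((-1:ℝ)^n / Real.Gamma (β/2 - k + 1)) *
      (Real.Gamma β / Real.Gamma (β/2 + k))) := by
    unfold t
    rw [hpow]
    field_simp
  rw [heq]
  exact neg_nonpos_of_nonneg (mul_nonneg hdiv.le
    (div_nonneg (Real.Gamma_nonneg_of_nonneg (by linarith)) hΓY.le))

lemma g_tele_lt2 {β : ℝ} (hβ1 : 1 < β) (hβ2 : β < 2) (k : ℤ) : g β k = t β k - t β (k+1) := by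
  have hane : (β/2 + k) ≠ 0 := by
    intro h0
    exact gamma_nonint_ne_zero hβ1 hβ2 k (by rw [h0]; exact Real.Gamma_zero)
  have hbne : (β/2 - k) ≠ 0 := by
    intro h0
    have : β/2 + (-k) = 0 := by push_cast; linarith
    exact gamma_nonint_ne_zero hβ1 hβ2 (-k) (by rw [show β/2 + ((-k:ℤ):ℝ) = β/2 + (-k:ℝ) by push_cast; ring, this]; exact Real.Gamma_zero)
  have hΓa : Real.Gamma (β/2 + k) ≠ 0 := gamma_nonint_ne_zero hβ1 hβ2 k
  have hΓb : Real.Gamma (β/2 - k) ≠ 0 := by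
    have := gamma_nonint_ne_zero hβ1 hβ2 (-k)
    rwa [show β/2 + ((-k:ℤ):ℝ) = β/2 - k by push_cast; ring] at this
  have ha : Real.Gamma (β/2 + k + 1) = (β/2 + k) * Real.Gamma (β/2 + k) :=
    Real.Gamma_add_one hane
  have hb : Real.Gamma (β/2 - k + 1) = (β/2 - k) * Real.Gamma (β/2 - k) :=
    Real.Gamma_add_one hbne
  have hβ : Real.Gamma (β + 1) = β * Real.Gamma β := Real.Gamma_add_one (by linarith)
  have hpow1 : ((-1:ℝ)^(k+1)) = -(-1:ℝ)^k := by
    rw [zpow_add_one₀ (by norm_num : (-1:ℝ) ≠ 0)]; ring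
  unfold g t
  rw [hpow1, hβ, ha, hb]
  push_cast
  rw [show β/2 + ((k:ℝ)+1) = β/2 + k + 1 by ring,
    show β/2 - ((k:ℝ)+1) + 1 = β/2 - k by ring, ha]
  have key : ∀ s C A B a b : ℝ, A ≠ 0 → B ≠ 0 → a ≠ 0 → b ≠ 0 →
      s * ((a + b) * C) / (b * B * (a * A)) = s * C / (A * (b * B)) - -s * C / (a * A * B) := by
    intros s C A B a b hA hB ha hb
    field_simp
    ring
  have h2 := key ((-1:ℝ)^k) (Real.Gamma β) _ _ _ _ hΓa hΓb hane hbne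
  rw [show (β/2+(k:ℝ)) + (β/2-(k:ℝ)) = β by ring] at h2
  exact h2

lemma Gamma_intcast_nonpos {z : ℤ} (hz : z ≤ 0) : Real.Gamma (z:ℝ) = 0 := by
  have : ((z:ℝ)) = -(((-z).toNat : ℕ) : ℝ) := by
    have h := Int.toNat_of_nonneg (by omega : 0 ≤ -z)
    have h2 : (((-z).toNat : ℕ) : ℝ) = ((-z : ℤ) : ℝ) := by exact_mod_cast h
    rw [h2]; push_cast; ring
  rw [this]
  exact Real.Gamma_neg_nat_eq_zero _

lemma Gamma_three : Real.Gamma 3 = 2 := by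
  have := Real.Gamma_nat_eq_factorial 2
  norm_num at this
  convert this using 2
  norm_num

lemma g_two (k : ℤ) : g 2 k = if k = 0 then 2 else if k = 1 ∨ k = -1 then -1 else 0 := by
  unfold g
  split_ifs with h1 h2
  · subst h1; norm_num [Real.Gamma_two, Gamma_three]
  · rcases h2 with h | h <;> subst h <;>
      norm_num [Real.Gamma_one, Gamma_three]
  · -- |k| ≥ 2
    rcases le_or_gt 2 k with hk | hk
    · have : (2:ℝ)/2 - k + 1 = ((2 - k : ℤ) : ℝ) := by push_cast; ring
      rw [this, Gamma_intcast_nonpos (by omega), zero_mul, div_zero]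
    · have hk' : k ≤ -2 := by omega
      have : (2:ℝ)/2 + k + 1 = ((2 + k : ℤ) : ℝ) := by push_cast; ring
      rw [this, Gamma_intcast_nonpos (by omega), mul_zero, div_zero]

lemma t_two (k : ℤ) : t 2 k = if k = 0 then 1 else if k = 1 then -1 else 0 := by
  unfold t
  split_ifs with h1 h2
  · subst h1; norm_num [Real.Gamma_one, Real.Gamma_two]
  · subst h2; norm_num [Real.Gamma_one, Real.Gamma_two]
  · rcases le_or_gt 2 k with hk | hk
    · have : (2:ℝ)/2 - k + 1 = ((2 - k : ℤ) : ℝ) := by push_cast; ring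
      rw [this, Gamma_intcast_nonpos (by omega), mul_zero, div_zero]
    · have hk' : k ≤ -1 := by omega
      have : (2:ℝ)/2 + k = ((1 + k : ℤ) : ℝ) := by push_cast; ring
      rw [this, Gamma_intcast_nonpos (by omega), zero_mul, div_zero]

lemma g_tele {β : ℝ} (hβ1 : 1 < β) (hβ2 : β ≤ 2) (k : ℤ) : g β k = t β k - t β (k+1) := by
  rcases eq_or_lt_of_le hβ2 with h2 | h2
  · subst h2
    rw [g_two, t_two, t_two]
    split_ifs <;> norm_num <;> omega
  · exact g_tele_lt2 hβ1 h2 k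

lemma g_nonpos {β : ℝ} (hβ1 : 1 < β) (hβ2 : β ≤ 2) {k : ℤ} (hk : k ≠ 0) : g β k ≤ 0 := by
  have main : ∀ m : ℤ, 1 ≤ m → g β m ≤ 0 := by
    intro m hm
    rcases eq_or_lt_of_le hβ2 with h2 | h2
    · subst h2
      rw [g_two]
      split_ifs <;> norm_num <;> omega
    · exact g_nonpos_lt2 hβ1 h2 hm
  rcases lt_or_gt_of_ne hk with h | h
  · rw [← g_symm]
    exact main _ (by omega)
  · exact main _ h

lemma t_nonneg {β : ℝ} (hβ1 : 1 < β) (hβ2 : β ≤ 2) {m : ℤ} (hm : m ≤ 0) : 0 ≤ t β m := by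
  rcases eq_or_lt_of_le hβ2 with h2 | h2
  · subst h2; rw [t_two]; split_ifs <;> norm_num <;> omega
  · exact t_nonneg_lt2 hβ1 h2 hm

lemma t_nonpos {β : ℝ} (hβ1 : 1 < β) (hβ2 : β ≤ 2) {k : ℤ} (hk : 1 ≤ k) : t β k ≤ 0 := by
  rcases eq_or_lt_of_le hβ2 with h2 | h2
  · subst h2; rw [t_two]; split_ifs <;> norm_num <;> omega
  · exact t_nonpos_lt2 hβ1 h2 hk

lemma telescope_nat (f : ℤ → ℝ) (N : ℕ) (m : ℤ) :
    ∑ k ∈ Finset.Icc m (m + N), (f k - f (k+1)) = f m - f (m + N + 1) := by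
  induction N with
  | zero => simp
  | succ N ih =>
    have hins : Finset.Icc m (m + (N+1:ℕ)) = insert (m + N + 1) (Finset.Icc m (m + N)) := by
      ext x; simp only [Finset.mem_Icc, Finset.mem_insert]; push_cast; omega
    rw [hins, Finset.sum_insert (by simp), ih]
    push_cast
    have : m + ((N:ℤ)+1) + 1 = m + N + 1 + 1 := by ring
    rw [this]
    ring

lemma telescope (f : ℤ → ℝ) (m n : ℤ) (h : m ≤ n) :
    ∑ k ∈ Finset.Icc m n, (f k - f (k+1)) = f m - f (n+1) := by
  have hN : n = m + ((n - m).toNat : ℤ) := by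
    have := Int.toNat_of_nonneg (by omega : 0 ≤ n - m); omega
  rw [hN]
  exact telescope_nat f _ m

lemma sum_g_nonneg {β : ℝ} (hβ1 : 1 < β) (hβ2 : β ≤ 2) {m n : ℤ} (hm : m ≤ 0) (hn : 0 ≤ n) :
    0 ≤ ∑ k ∈ Finset.Icc m n, g β k := by
  have : ∑ k ∈ Finset.Icc m n, g β k = t β m - t β (n+1) := by
    rw [← telescope _ _ _ (by omega)]
    exact Finset.sum_congr rfl fun k _ => g_tele hβ1 hβ2 k
  rw [this]
  have h1 := t_nonneg hβ1 hβ2 hm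
  have h2 := t_nonpos hβ1 hβ2 (show 1 ≤ n+1 by omega)
  linarith

lemma sum_shift (F : ℤ → ℝ) (N : ℕ) (i : ℤ) :
    ∑ j ∈ Finset.range N, F (i - j) = ∑ k ∈ Finset.Icc (i - N + 1) i, F k := by
  apply Finset.sum_bij' (i := fun (j : ℕ) (_ : j ∈ Finset.range N) => i - j)
    (j := fun (k : ℤ) (_ : k ∈ Finset.Icc (i - N + 1) i) => (i - k).toNat)
  · intro a ha
    simp only [Finset.mem_range] at ha
    simp only [Finset.mem_Icc]
    omega
  · intro a ha
    simp only [Finset.mem_Icc] at ha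
    simp only [Finset.mem_range]
    omega
  · intro a ha
    simp only [Finset.mem_range] at ha
    omega
  · intro a ha
    simp only [Finset.mem_Icc] at ha
    have : ((i - a).toNat : ℤ) = i - a := Int.toNat_of_nonneg (by omega)
    omega
  · intro a ha
    rfl

lemma sum_reflect (F : ℤ → ℝ) (a b i : ℤ) :
    ∑ k ∈ Finset.Icc a b, F k = ∑ k ∈ Finset.Icc (i - b) (i - a), F (i - k) := by
  apply Finset.sum_bij' (i := fun (k : ℤ) (_ : k ∈ Finset.Icc a b) => i - k)
    (j := fun (k : ℤ) (_ : k ∈ Finset.Icc (i - b) (i - a)) => i - k)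
  · intro x hx; simp only [Finset.mem_Icc] at *; omega
  · intro x hx; simp only [Finset.mem_Icc] at *; omega
  · intro x hx; omega
  · intro x hx; omega
  · intro x hx; rw [show i - (i - x) = x by ring]

lemma sum_Icc_one (F : ℤ → ℝ) (N : ℕ) :
    ∑ k ∈ Finset.Icc (1:ℤ) N, F k = ∑ j ∈ Finset.range N, F (j+1) := by
  symm
  apply Finset.sum_bij' (i := fun (j : ℕ) (_ : j ∈ Finset.range N) => (j:ℤ) + 1)
    (j := fun (k : ℤ) (_ : k ∈ Finset.Icc (1:ℤ) N) => (k - 1).toNat)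
  · intro x hx; simp only [Finset.mem_range] at hx; simp only [Finset.mem_Icc]; omega
  · intro x hx
    simp only [Finset.mem_Icc] at hx
    simp only [Finset.mem_range]
    omega
  · intro x hx; omega
  · intro x hx
    simp only [Finset.mem_Icc] at hx
    have : ((x - 1).toNat : ℤ) = x - 1 := Int.toNat_of_nonneg (by omega)
    omega
  · intro x hx; rfl

lemma row_sum_univ_nonneg {β : ℝ} (hβ1 : 1 < β) (hβ2 : β ≤ 2) (M : ℕ) (hM : 2 ≤ M)
    (q : Fin (M - 1)) : 0 ≤ ∑ q' : Fin (M - 1), g β ((q:ℤ) - (q':ℤ)) := by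
  have h1 : ∑ q' : Fin (M - 1), g β ((q:ℤ) - (q':ℤ))
      = ∑ j ∈ Finset.range (M - 1), g β ((q:ℤ) - (j:ℕ)) :=
    Fin.sum_univ_eq_sum_range (fun j => g β ((q:ℤ) - (j:ℕ))) (M-1)
  rw [h1, sum_shift]
  apply sum_g_nonneg hβ1 hβ2
  · have hq : (q:ℕ) < M - 1 := q.isLt
    omega
  · exact Int.ofNat_nonneg _

lemma row_sum_abs_le {β : ℝ} (hβ1 : 1 < β) (hβ2 : β ≤ 2) (M : ℕ) (hM : 2 ≤ M)
    (q : Fin (M - 1)) :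
    ∑ q' ∈ Finset.univ.erase q, |g β ((q:ℤ) - (q':ℤ))| ≤ g β 0 := by
  have habs : ∀ q' ∈ Finset.univ.erase q, |g β ((q:ℤ) - (q':ℤ))| = -g β ((q:ℤ) - (q':ℤ)) := by
    intro q' hq'
    have hne : q' ≠ q := Finset.ne_of_mem_erase hq'
    apply abs_of_nonpos
    apply g_nonpos hβ1 hβ2
    intro h0
    apply hne
    have : (q':ℤ) = (q:ℤ) := by omega
    exact Fin.ext (by exact_mod_cast this)
  rw [Finset.sum_congr rfl habs, Finset.sum_neg_distrib,
    Finset.sum_erase_eq_sub (Finset.mem_univ q)]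
  have h0 : ((q:ℤ) - (q:ℤ)) = 0 := by ring
  rw [h0]
  have := row_sum_univ_nonneg hβ1 hβ2 M hM q
  linarith

lemma kron_left_mulVec {P Q : Type*} [Fintype P] [Fintype Q] [DecidableEq P]
    (G : Matrix Q Q ℝ) (x : P × Q → ℝ) (p : P) (q : Q) :
    (((1 : Matrix P P ℝ) ⊗ₖ G).mulVec x) (p,q) = ∑ q', G q q' * x (p, q') := by
  simp [Matrix.mulVec, dotProduct, Fintype.sum_prod_type, Matrix.one_apply,
    ite_mul, zero_mul, one_mul, Finset.sum_ite_eq, mul_comm]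

lemma kron_right_mulVec {P Q : Type*} [Fintype P] [Fintype Q] [DecidableEq Q]
    (G : Matrix P P ℝ) (x : P × Q → ℝ) (p : P) (q : Q) :
    ((G ⊗ₖ (1 : Matrix Q Q ℝ)).mulVec x) (p,q) = ∑ p', G p p' * x (p', q) := by
  simp [Matrix.mulVec, dotProduct, Fintype.sum_prod_type, Matrix.one_apply,
    ite_mul, mul_ite, zero_mul, mul_zero, one_mul, mul_one, Finset.sum_ite_eq, mul_comm]

lemma sum_delta_left {P Q : Type*} [Fintype P] [Fintype Q] [DecidableEq P]
    (F : Q → ℝ) (p : P) :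
    ∑ y : P × Q, (if p = y.1 then 1 else 0 : ℝ) * F y.2 = ∑ q', F q' := by
  simp [Fintype.sum_prod_type, ite_mul, zero_mul, one_mul, Finset.sum_ite_eq]

lemma sum_delta_right {P Q : Type*} [Fintype P] [Fintype Q] [DecidableEq Q]
    (F : P → ℝ) (q : Q) :
    ∑ y : P × Q, F y.1 * (if q = y.2 then 1 else 0 : ℝ) = ∑ p', F p' := by
  simp [Fintype.sum_prod_type, mul_ite, mul_zero, mul_one, Finset.sum_ite_eq]

lemma sum_transform (M : ℕ) (hM : 2 ≤ M) (F : ℤ → ℝ) (v : ℤ → ℝ)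
    (hv0 : v 0 = 0) (hvM : v M = 0) (q : Fin (M-1)) :
    ∑ k ∈ Finset.Icc (((q:ℤ)+1) - (M:ℤ)) ((q:ℤ)+1), F k * v (((q:ℤ)+1) - k)
      = ∑ q' : Fin (M-1), F ((q:ℤ) - (q':ℤ)) * v ((q':ℤ)+1) := by
  set i := (q:ℤ)+1 with hi
  rw [sum_reflect (fun k => F k * v (i - k)) _ _ i]
  have h1 : i - i = 0 := sub_self i
  have h2 : i - (i - M) = (M:ℤ) := by ring
  rw [h1, h2]
  have h3 : ∀ k ∈ Finset.Icc (0:ℤ) (M:ℤ), F (i-k) * v (i - (i-k)) = F (i-k) * v k := by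
    intro k hk; rw [show i - (i-k) = k by ring]
  rw [Finset.sum_congr rfl h3]
  rw [← Finset.sum_subset (show Finset.Icc (1:ℤ) ((M:ℤ)-1) ⊆ Finset.Icc 0 (M:ℤ) by
        intro x hx; simp only [Finset.mem_Icc] at *; omega)
      (by intro x hx hnx
          simp only [Finset.mem_Icc] at hx hnx
          have : x = 0 ∨ x = (M:ℤ) := by omega
          rcases this with h|h <;> subst h <;> simp [hv0, hvM])]
  have h4 : ((M:ℤ)-1) = ((M-1:ℕ):ℤ) := by
    push_cast [Nat.cast_sub (by omega : 1 ≤ M)]; ring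
  rw [h4, sum_Icc_one (fun k => F (i-k) * v k) (M-1)]
  rw [← Fin.sum_univ_eq_sum_range (fun j => F (i - ((j:ℤ)+1)) * v ((j:ℤ)+1)) (M-1)]
  apply Finset.sum_congr rfl
  intro q' _
  rw [show i - ((q':ℤ)+1) = (q:ℤ) - (q':ℤ) by rw [hi]; ring]

/-- Theorem 3.1 (unique solvability in 2D). -/
theorem homogeneous2D_only_zero_and_unique_solvability
    (β γ : ℝ) (hβ1 : 1 < β) (hβ2 : β ≤ 2) (hγ1 : 1 < γ) (hγ2 : γ ≤ 2)
    (M₁ M₂ : ℕ) (hM₁ : 2 ≤ M₁) (hM₂ : 2 ≤ M₂)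
    (K₁ K₂ h₁ h₂ σ c : ℝ) (hK₁ : 0 < K₁) (hK₂ : 0 < K₂) (hh₁ : 0 < h₁) (hh₂ : 0 < h₂)
    (hσ1 : 0 < σ) (hσ2 : σ ≤ 1) (hc : 0 < c)
    (w : ℤ → ℤ → ℝ)
    (hbd : ∀ i j : ℤ, 0 ≤ i → i ≤ (M₁ : ℤ) → 0 ≤ j → j ≤ (M₂ : ℤ) →
      (i = 0 ∨ i = (M₁ : ℤ) ∨ j = 0 ∨ j = (M₂ : ℤ)) → w i j = 0)
    (heq : ∀ i j : ℤ, 1 ≤ i → i ≤ (M₁ : ℤ) - 1 → 1 ≤ j → j ≤ (M₂ : ℤ) - 1 →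
      c * w i j =
        -(K₁ * σ * h₁ ^ (-β)) * ∑ k ∈ Finset.Icc (i - (M₁ : ℤ)) i, g β k * w (i - k) j
        - K₂ * σ * h₂ ^ (-γ) * ∑ k ∈ Finset.Icc (j - (M₂ : ℤ)) j, g γ k * w i (j - k)) :
    (∀ i j : ℤ, 0 ≤ i → i ≤ (M₁ : ℤ) → 0 ≤ j → j ≤ (M₂ : ℤ) → w i j = 0) ∧
    ∀ b : Fin (M₂ - 1) × Fin (M₁ - 1) → ℝ,
      ∃! x : Fin (M₂ - 1) × Fin (M₁ - 1) → ℝ,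
        (Mmat β γ M₁ M₂ K₁ K₂ h₁ h₂ σ c).mulVec x = b := by
  set a₁ : ℝ := σ * K₁ * h₁ ^ (-β) with ha₁def
  set a₂ : ℝ := σ * K₂ * h₂ ^ (-γ) with ha₂def
  have ha₁ : 0 < a₁ := by
    have := Real.rpow_pos_of_pos hh₁ (-β); positivity
  have ha₂ : 0 < a₂ := by
    have := Real.rpow_pos_of_pos hh₂ (-γ); positivity
  set A := Mmat β γ M₁ M₂ K₁ K₂ h₁ h₂ σ c with hAdef
  have hg0β := g_zero_pos hβ1
  have hg0γ := g_zero_pos hγ1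
  have hentry : ∀ z y : Fin (M₂ - 1) × Fin (M₁ - 1), A z y =
      c * (if z = y then 1 else 0)
      + a₁ * ((if z.1 = y.1 then 1 else 0) * g β ((z.2:ℤ) - (y.2:ℤ)))
      + a₂ * (g γ ((z.1:ℤ) - (y.1:ℤ)) * (if z.2 = y.2 then 1 else 0)) := by
    intro z y
    simp only [hAdef, Mmat, Matrix.add_apply, Matrix.smul_apply, Matrix.one_apply,
      Matrix.kroneckerMap_apply, Gmat, Matrix.of_apply, smul_eq_mul, ← ha₁def, ← ha₂def]
  -- strict diagonal dominance
  have hdom : ∀ z, ∑ y ∈ Finset.univ.erase z, ‖A z y‖ < ‖A z z‖ := by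
    intro z
    obtain ⟨p, q⟩ := z
    have hdiag : A (p,q) (p,q) = c + a₁ * g β 0 + a₂ * g γ 0 := by
      rw [hentry]; simp
    have hdpos : 0 < c + a₁ * g β 0 + a₂ * g γ 0 := by
      have := mul_pos ha₁ hg0β; have := mul_pos ha₂ hg0γ; linarith
    have hstep1 : ∀ y ∈ Finset.univ.erase (p,q), ‖A (p,q) y‖ ≤
        a₁ * ((if p = y.1 then 1 else 0) * |g β ((q:ℤ) - (y.2:ℤ))|)
        + a₂ * (|g γ ((p:ℤ) - (y.1:ℤ))| * (if q = y.2 then 1 else 0)) := by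
      intro y hy
      have hne : (p,q) ≠ y := (Finset.ne_of_mem_erase hy).symm
      rw [Real.norm_eq_abs, hentry, if_neg hne, mul_zero, zero_add]
      have e1 : |a₁ * ((if p = y.1 then 1 else 0) * g β ((q:ℤ) - (y.2:ℤ)))|
          = a₁ * ((if p = y.1 then 1 else 0) * |g β ((q:ℤ) - (y.2:ℤ))|) := by
        split_ifs <;> simp [abs_mul, abs_of_pos ha₁]
      have e2 : |a₂ * (g γ ((p:ℤ) - (y.1:ℤ)) * (if q = y.2 then 1 else 0))|
          = a₂ * (|g γ ((p:ℤ) - (y.1:ℤ))| * (if q = y.2 then 1 else 0)) := by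
        split_ifs <;> simp [abs_mul, abs_of_pos ha₂]
      calc |a₁ * ((if p = y.1 then 1 else 0) * g β ((q:ℤ) - (y.2:ℤ)))
              + a₂ * (g γ ((p:ℤ) - (y.1:ℤ)) * (if q = y.2 then 1 else 0))|
          ≤ |a₁ * ((if p = y.1 then 1 else 0) * g β ((q:ℤ) - (y.2:ℤ)))|
              + |a₂ * (g γ ((p:ℤ) - (y.1:ℤ)) * (if q = y.2 then 1 else 0))| := abs_add_le _ _
        _ = _ := by rw [e1, e2]
    have hsum := Finset.sum_le_sum hstep1
    rw [Finset.sum_add_distrib] at hsum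
    have hs1 : ∑ y ∈ Finset.univ.erase (p,q),
        a₁ * ((if p = y.1 then 1 else 0) * |g β ((q:ℤ) - (y.2:ℤ))|) ≤ a₁ * g β 0 := by
      rw [Finset.sum_erase_eq_sub (Finset.mem_univ (p,q))]
      have huniv : ∑ y : Fin (M₂ - 1) × Fin (M₁ - 1),
          a₁ * ((if p = y.1 then 1 else 0) * |g β ((q:ℤ) - (y.2:ℤ))|)
          = a₁ * ∑ q' : Fin (M₁ - 1), |g β ((q:ℤ) - (q':ℤ))| := by
        rw [← Finset.mul_sum]
        congr 1
        exact sum_delta_left (fun q' : Fin (M₁ - 1) => |g β ((q:ℤ) - (q':ℤ))|) p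
      rw [huniv]
      have hz : ((q:ℤ) - (q:ℤ)) = 0 := sub_self _
      have habs0 : |g β ((q:ℤ) - (q:ℤ))| = g β 0 := by rw [hz]; exact abs_of_pos hg0β
      have hrow := row_sum_abs_le hβ1 hβ2 M₁ hM₁ q
      rw [Finset.sum_erase_eq_sub (Finset.mem_univ q), habs0] at hrow
      rw [if_pos rfl, one_mul, habs0]
      nlinarith [mul_le_mul_of_nonneg_left hrow ha₁.le]
    have hs2 : ∑ y ∈ Finset.univ.erase (p,q),
        a₂ * (|g γ ((p:ℤ) - (y.1:ℤ))| * (if q = y.2 then 1 else 0)) ≤ a₂ * g γ 0 := by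
      rw [Finset.sum_erase_eq_sub (Finset.mem_univ (p,q))]
      have huniv : ∑ y : Fin (M₂ - 1) × Fin (M₁ - 1),
          a₂ * (|g γ ((p:ℤ) - (y.1:ℤ))| * (if q = y.2 then 1 else 0))
          = a₂ * ∑ p' : Fin (M₂ - 1), |g γ ((p:ℤ) - (p':ℤ))| := by
        rw [← Finset.mul_sum]
        congr 1
        exact sum_delta_right (fun p' : Fin (M₂ - 1) => |g γ ((p:ℤ) - (p':ℤ))|) q
      rw [huniv]
      have hz : ((p:ℤ) - (p:ℤ)) = 0 := sub_self _
      have habs0 : |g γ ((p:ℤ) - (p:ℤ))| = g γ 0 := by rw [hz]; exact abs_of_pos hg0γ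
      have hrow := row_sum_abs_le hγ1 hγ2 M₂ hM₂ p
      rw [Finset.sum_erase_eq_sub (Finset.mem_univ p), habs0] at hrow
      rw [if_pos rfl, mul_one, habs0]
      nlinarith [mul_le_mul_of_nonneg_left hrow ha₂.le]
    rw [Real.norm_eq_abs, hdiag, abs_of_pos hdpos]
    calc ∑ y ∈ Finset.univ.erase (p,q), ‖A (p,q) y‖ ≤ _ := hsum
      _ ≤ a₁ * g β 0 + a₂ * g γ 0 := add_le_add hs1 hs2
      _ < c + a₁ * g β 0 + a₂ * g γ 0 := by linarith
  have hdet : A.det ≠ 0 := det_ne_zero_of_sum_row_lt_diag hdom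
  have hdet' : IsUnit A.det := isUnit_iff_ne_zero.2 hdet
  have hsolve : ∀ b0 : Fin (M₂ - 1) × Fin (M₁ - 1) → ℝ, ∃! x, A.mulVec x = b0 := by
    intro b0
    refine ⟨A⁻¹.mulVec b0, ?_, ?_⟩
    · show A.mulVec (A⁻¹.mulVec b0) = b0
      rw [Matrix.mulVec_mulVec, Matrix.mul_nonsing_inv A hdet', Matrix.one_mulVec]
    · intro y hy
      have h := congrArg (fun v => A⁻¹.mulVec v) hy
      simpa [Matrix.mulVec_mulVec, Matrix.nonsing_inv_mul A hdet', Matrix.one_mulVec] using h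
  refine ⟨?_, hsolve⟩
  -- part 1
  set x0 : Fin (M₂ - 1) × Fin (M₁ - 1) → ℝ := fun z => w ((z.2:ℤ)+1) ((z.1:ℤ)+1) with hx0def
  have hMcast₁ : ((M₁ - 1 : ℕ) : ℤ) = (M₁ : ℤ) - 1 := by
    push_cast [Nat.cast_sub (by omega : 1 ≤ M₁)]; ring
  have hMcast₂ : ((M₂ - 1 : ℕ) : ℤ) = (M₂ : ℤ) - 1 := by
    push_cast [Nat.cast_sub (by omega : 1 ≤ M₂)]; ring
  have hx0 : A.mulVec x0 = 0 := by
    funext z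
    obtain ⟨p, q⟩ := z
    have hqlt : ((q:ℕ) : ℤ) < ((M₁ - 1:ℕ):ℤ) := by exact_mod_cast q.isLt
    have hplt : ((p:ℕ) : ℤ) < ((M₂ - 1:ℕ):ℤ) := by exact_mod_cast p.isLt
    rw [hMcast₁] at hqlt
    rw [hMcast₂] at hplt
    set i : ℤ := (q:ℤ) + 1 with hidef
    set j : ℤ := (p:ℤ) + 1 with hjdef
    have hAmv : (A.mulVec x0) (p, q) = c * x0 (p,q)
        + a₁ * (∑ q' : Fin (M₁ - 1), g β ((q:ℤ) - (q':ℤ)) * x0 (p, q'))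
        + a₂ * (∑ p' : Fin (M₂ - 1), g γ ((p:ℤ) - (p':ℤ)) * x0 (p', q)) := by
      rw [hAdef, Mmat, Matrix.add_mulVec, Matrix.add_mulVec, Matrix.smul_mulVec,
        Matrix.smul_mulVec, Matrix.smul_mulVec, Matrix.one_mulVec]
      simp only [Pi.add_apply, Pi.smul_apply, smul_eq_mul, ← ha₁def, ← ha₂def]
      rw [kron_left_mulVec, kron_right_mulVec]
      simp only [Gmat, Matrix.of_apply]
    have hS₁ : ∑ k ∈ Finset.Icc (i - (M₁ : ℤ)) i, g β k * w (i - k) j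
        = ∑ q' : Fin (M₁ - 1), g β ((q:ℤ) - (q':ℤ)) * x0 (p, q') := by
      have := sum_transform M₁ hM₁ (g β) (fun z => w z j)
        (hbd 0 j le_rfl (by omega) (by omega) (by omega) (Or.inl rfl))
        (hbd M₁ j (by omega) le_rfl (by omega) (by omega) (Or.inr (Or.inl rfl))) q
      rw [hidef]
      exact this
    have hS₂ : ∑ k ∈ Finset.Icc (j - (M₂ : ℤ)) j, g γ k * w i (j - k)
        = ∑ p' : Fin (M₂ - 1), g γ ((p:ℤ) - (p':ℤ)) * x0 (p', q) := by
      have := sum_transform M₂ hM₂ (g γ) (fun z => w i z)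
        (hbd i 0 (by omega) (by omega) le_rfl (by omega) (Or.inr (Or.inr (Or.inl rfl))))
        (hbd i M₂ (by omega) (by omega) (by omega) le_rfl (Or.inr (Or.inr (Or.inr rfl)))) p
      rw [hjdef]
      exact this
    have hw := heq i j (by omega) (by omega) (by omega) (by omega)
    rw [hS₁, hS₂] at hw
    have hx0pq : x0 (p,q) = w i j := rfl
    rw [hAmv, hx0pq, Pi.zero_apply, hw, ha₁def, ha₂def]
    ring
  have hx0zero : x0 = 0 := by
    obtain ⟨x', hx', huniq⟩ := hsolve 0
    have h1 := huniq x0 hx0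
    have h2 := huniq 0 (by simp [Matrix.mulVec_zero])
    rw [h1, h2]
  intro i j hi0 hiM hj0 hjM
  by_cases hb : i = 0 ∨ i = (M₁ : ℤ) ∨ j = 0 ∨ j = (M₂ : ℤ)
  · exact hbd i j hi0 hiM hj0 hjM hb
  · push_neg at hb
    obtain ⟨h1, h2, h3, h4⟩ := hb
    have hq : (i - 1).toNat < M₁ - 1 := by omega
    have hp : (j - 1).toNat < M₂ - 1 := by omega
    set q : Fin (M₁ - 1) := ⟨(i-1).toNat, hq⟩
    set p : Fin (M₂ - 1) := ⟨(j-1).toNat, hp⟩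
    have hqi : ((q:ℕ):ℤ) + 1 = i := by simp only [q]; omega
    have hpj : ((p:ℕ):ℤ) + 1 = j := by simp only [p]; omega
    have : x0 (p, q) = w i j := by rw [hx0def]; simp only []; rw [hqi, hpj]
    rw [← this, hx0zero]
    rfl
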